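/- Let N_φ ∈ ℂ and define φₙ(x) = (N_φ/(2ⁿ √(n!))) Hₙ(sinh x) e^{−cosh²x} for n ≥ 0. Then for every n ≥ 0 and every x ∈ ℝ: −(1/(2 cosh²x)) φₙ″(x) + (1/2)(sech²x − 2) tanh(x) φₙ′(x) − φₙ(x) = n φₙ(x). That is, each φₙ is an eigenfunction of the second-order differential operator H = −(1/(2 cosh²x)) d²/dx² + (1/2)(sech²x − 2) tanh(x) d/dx − 1 with eigenvalue n. -/

import Mathlib

/-- The physicist's Hermite polynomials:
`H₀(y) = 1`, `Hₙ(y) = 2y H_{n−1}(y) − H_{n−1}′(y)`. -/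
noncomputable def hermiteH : ℕ → ℝ → ℝ
  | 0 => fun _ => 1
  | n + 1 => fun y => 2 * y * hermiteH n y - deriv (hermiteH n) y

/-!
With `y = sinh x` and the gauge factor `e^{−cosh²x}`, the Hamiltonian becomes `−½` times the
Hermite operator `d²/dy² − 2y d/dy`: for `g(x) = p(sinh x) e^{−cosh²x}` one has
`g' = −cosh x · (2yp − p')(sinh x) e^{−cosh²x}`, and in the second derivative the
`tanh`-terms cancel. The Hermite equation `Hₙ'' − 2y Hₙ' = −2n Hₙ` then gives the eigenvalue `n`;
the normalisation constant plays no role, since the operator is linear.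
-/

open Polynomial hiding deriv
open Real

noncomputable def hermiteRaise (p : ℝ[X]) : ℝ[X] := 2 * X * p - derivative p

noncomputable def physHermite : ℕ → ℝ[X]
  | 0 => 1
  | n + 1 => hermiteRaise (physHermite n)

theorem physHermite_succ (n : ℕ) : physHermite (n + 1) = hermiteRaise (physHermite n) := rfl

theorem hermiteH_eq_eval (n : ℕ) : hermiteH n = fun y => (physHermite n).eval y := by
  induction n with
  | zero => funext y; simp [hermiteH, physHermite]
  | succ n ih => funext y; simp [hermiteH, physHermite_succ, hermiteRaise, ih]

theorem derivative_physHermite_succ (n : ℕ) :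
    derivative (physHermite (n + 1)) = 2 * (n + 1) * physHermite n := by
  induction n with
  | zero => simp [physHermite, hermiteRaise]
  | succ n ih =>
    rw [physHermite_succ (n + 1), hermiteRaise, derivative_sub, derivative_mul, ih,
      physHermite_succ n, hermiteRaise]
    simp only [derivative_mul, derivative_X, derivative_ofNat, derivative_natCast,
      derivative_add, derivative_one]
    push_cast
    ring

theorem physHermite_ode (n : ℕ) :
    derivative (derivative (physHermite n)) - 2 * X * derivative (physHermite n)
      = -2 * (n : ℝ[X]) * physHermite n := by
  cases n with
  | zero => simp [physHermite]
  | succ n =>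
    rw [derivative_physHermite_succ, derivative_mul, physHermite_succ, hermiteRaise]
    simp only [derivative_mul, derivative_ofNat, derivative_natCast, derivative_add, derivative_one]
    push_cast
    ring

noncomputable def sinhGauge (p : ℝ[X]) (x : ℝ) : ℝ := p.eval (sinh x) * exp (-cosh x ^ 2)

theorem hasDerivAt_sinhGauge (p : ℝ[X]) (x : ℝ) :
    HasDerivAt (sinhGauge p) (-(cosh x * sinhGauge (hermiteRaise p) x)) x := by
  have hpoly := (p.hasDerivAt (sinh x)).comp x (hasDerivAt_sinh x)
  have hexp := ((hasDerivAt_cosh x).fun_pow 2).fun_neg.exp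
  refine (hpoly.mul hexp).congr_deriv ?_
  simp only [sinhGauge, hermiteRaise, Function.comp_apply, eval_sub, eval_mul, eval_ofNat, eval_X]
  ring

theorem deriv_sinhGauge (p : ℝ[X]) :
    deriv (sinhGauge p) = fun x => -(cosh x * sinhGauge (hermiteRaise p) x) :=
  funext fun x => (hasDerivAt_sinhGauge p x).deriv

theorem differentiable_sinhGauge (p : ℝ[X]) : Differentiable ℝ (sinhGauge p) :=
  fun x => (hasDerivAt_sinhGauge p x).differentiableAt

theorem differentiable_deriv_sinhGauge (p : ℝ[X]) : Differentiable ℝ (deriv (sinhGauge p)) := by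
  rw [deriv_sinhGauge]
  exact (differentiable_cosh.mul (differentiable_sinhGauge _)).neg

theorem deriv_deriv_sinhGauge (p : ℝ[X]) (x : ℝ) :
    deriv (deriv (sinhGauge p)) x
      = -(sinh x * sinhGauge (hermiteRaise p) x)
        + cosh x ^ 2 * sinhGauge (hermiteRaise (hermiteRaise p)) x := by
  rw [deriv_sinhGauge, ((hasDerivAt_cosh x).fun_mul (hasDerivAt_sinhGauge _ x)).fun_neg.deriv]
  ring

theorem hamiltonian_sinhGauge (p : ℝ[X]) (x : ℝ) :
    -(1 / (2 * cosh x ^ 2)) * deriv (deriv (sinhGauge p)) x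
      + 1 / 2 * ((1 / cosh x) ^ 2 - 2) * tanh x * deriv (sinhGauge p) x
      - sinhGauge p x
      = -(1 / 2) * sinhGauge (derivative (derivative p) - 2 * X * derivative p) x := by
  have hcosh : cosh x ≠ 0 := (cosh_pos x).ne'
  rw [deriv_deriv_sinhGauge, deriv_sinhGauge, tanh_eq_sinh_div_cosh]
  simp only [sinhGauge, hermiteRaise, derivative_sub, derivative_mul, derivative_ofNat,
    derivative_X, eval_sub, eval_mul, eval_add, eval_ofNat, eval_X, eval_zero, eval_one]
  field_simp
  ring

theorem hamiltonian_sinhGauge_physHermite (n : ℕ) (x : ℝ) :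
    -(1 / (2 * cosh x ^ 2)) * deriv (deriv (sinhGauge (physHermite n))) x
      + 1 / 2 * ((1 / cosh x) ^ 2 - 2) * tanh x * deriv (sinhGauge (physHermite n)) x
      - sinhGauge (physHermite n) x
      = n * sinhGauge (physHermite n) x := by
  rw [hamiltonian_sinhGauge, physHermite_ode]
  simp only [sinhGauge, eval_mul, eval_neg, eval_ofNat, eval_natCast]
  ring

theorem deriv_const_mul_ofReal (c : ℂ) {g : ℝ → ℝ} (hg : Differentiable ℝ g) :
    deriv (fun x => c * (g x : ℂ)) = fun x => c * ((deriv g x : ℝ) : ℂ) :=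
  funext fun x => ((hg x).hasDerivAt.ofReal_comp.const_mul c).deriv

/-- each `φₙ(x) = (N_φ/(2ⁿ√(n!))) Hₙ(sinh x) e^{−cosh²x}` is an
eigenfunction, with eigenvalue `n`, of the non self-adjoint Hamiltonian
`H = −(1/(2cosh²x)) d²/dx² + (1/2)(sech²x − 2) tanh x d/dx − 1`. -/
theorem stmt19 (Nφ : ℂ)
    (φ : ℕ → ℝ → ℂ)
    (hφdef : ∀ n : ℕ, φ n = fun x =>
      Nφ / ((2 : ℂ) ^ n * (Real.sqrt n.factorial : ℂ))
        * (hermiteH n (Real.sinh x) : ℂ) * (Real.exp (-(Real.cosh x) ^ 2) : ℂ)) :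
    ∀ (n : ℕ) (x : ℝ),
      -((1 / (2 * (Real.cosh x) ^ 2) : ℝ) : ℂ) * deriv (deriv (φ n)) x
        + (((1 / 2 : ℝ) * ((1 / Real.cosh x) ^ 2 - 2) * Real.tanh x : ℝ) : ℂ)
          * deriv (φ n) x
        - φ n x
      = (n : ℂ) * φ n x := by
  intro n x
  set c : ℂ := Nφ / ((2 : ℂ) ^ n * (Real.sqrt n.factorial : ℂ))
  have hφ : φ n = fun x => c * (sinhGauge (physHermite n) x : ℂ) := by
    funext y
    simp only [hφdef, hermiteH_eq_eval, sinhGauge, Complex.ofReal_mul]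
    ring
  rw [hφ, deriv_const_mul_ofReal c (differentiable_sinhGauge _),
    deriv_const_mul_ofReal c (differentiable_deriv_sinhGauge _)]
  have key := congrArg (fun t : ℝ => (t : ℂ)) (hamiltonian_sinhGauge_physHermite n x)
  push_cast at key ⊢
  linear_combination c * key
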